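/- The map $x \mapsto \Pi_w(gx)$, restricted to $V_0$, preserves Lebesgue measure on $V_0$ for every $g \in \mathbb{H}_n$ and every horizontal $w$ with $y_n(w) = 1$. Consequently $\mu(Q_w(g,r)) = \mu(\delta_r(R_w)) = r^{2n+2}\mu(R_w)/r \approx r^{2n+1}$, i.e., the Lebesgue measure of $Q_w(g,r) = \Pi_w(g\,\delta_r(R_w))$ is comparable to $r^{2n+1}$ independently of $g$. -/

import Mathlib

open scoped BigOperators
noncomputable section

/-- The Heisenberg group `ℍ_n`, as `ℝ^n × ℝ^n × ℝ`. -/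
@[ext]
structure Heis (n : ℕ) where
  x : Fin n → ℝ
  y : Fin n → ℝ
  z : ℝ

namespace Heis

variable {n : ℕ}

/-- The standard symplectic form on `ℝ^{2n}`. -/
def Om (v w : (Fin n → ℝ) × (Fin n → ℝ)) : ℝ :=
  ∑ i, (v.1 i * w.2 i - w.1 i * v.2 i)

/-- The horizontal projection `π : ℍ_n → ℝ^{2n}`. -/
def pr (h : Heis n) : (Fin n → ℝ) × (Fin n → ℝ) := (h.x, h.y)

lemma Om_add_left (x1 x2 y1 y2 : Fin n → ℝ) (w : (Fin n → ℝ) × (Fin n → ℝ)) :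
    Om (x1 + x2, y1 + y2) w = Om (x1, y1) w + Om (x2, y2) w := by
  simp only [Om, Pi.add_apply]
  rw [← Finset.sum_add_distrib]
  exact Finset.sum_congr rfl (fun i _ => by ring)

lemma Om_add_right (v : (Fin n → ℝ) × (Fin n → ℝ)) (x1 x2 y1 y2 : Fin n → ℝ) :
    Om v (x1 + x2, y1 + y2) = Om v (x1, y1) + Om v (x2, y2) := by
  simp only [Om, Pi.add_apply]
  rw [← Finset.sum_add_distrib]
  exact Finset.sum_congr rfl (fun i _ => by ring)

lemma Om_neg_self (x y : Fin n → ℝ) : Om (-x, -y) (x, y) = 0 := by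
  simp only [Om, Pi.neg_apply]
  exact Finset.sum_eq_zero (fun i _ => by ring)

def mul' (g h : Heis n) : Heis n :=
  ⟨g.x + h.x, g.y + h.y, g.z + h.z + Om (pr g) (pr h) / 2⟩

instance : Group (Heis n) where
  mul := mul'
  one := ⟨0, 0, 0⟩
  inv g := ⟨-g.x, -g.y, -g.z⟩
  mul_assoc a b c := by
    show mul' (mul' a b) c = mul' a (mul' b c)
    simp only [mul', pr, Om_add_left, Om_add_right]
    refine Heis.ext ?_ ?_ ?_
    · exact add_assoc _ _ _
    · exact add_assoc _ _ _
    · ring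
  one_mul a := by
    show mul' ⟨0, 0, 0⟩ a = a
    simp only [mul', pr, Om]
    refine Heis.ext ?_ ?_ ?_ <;> simp
  mul_one a := by
    show mul' a ⟨0, 0, 0⟩ = a
    simp only [mul', pr, Om]
    refine Heis.ext ?_ ?_ ?_ <;> simp
  inv_mul_cancel a := by
    show mul' ⟨-a.x, -a.y, -a.z⟩ a = ⟨0, 0, 0⟩
    simp only [mul', pr]
    refine Heis.ext ?_ ?_ ?_
    · simp
    · simp
    · simp [Om_neg_self]

lemma mul_def (g h : Heis n) :
    g * h = ⟨g.x + h.x, g.y + h.y, g.z + h.z + Om (pr g) (pr h) / 2⟩ := rfl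

lemma one_def : (1 : Heis n) = ⟨0, 0, 0⟩ := rfl

lemma inv_def (g : Heis n) : g⁻¹ = ⟨-g.x, -g.y, -g.z⟩ := rfl

/-- The anisotropic dilations `δ_t`. -/
def dil (t : ℝ) (h : Heis n) : Heis n := ⟨t • h.x, t • h.y, t ^ 2 * h.z⟩

/-- The coordinate function `y_n` (the last `y`-coordinate). -/
def yn (h : Heis n) : ℝ := if hn : n = 0 then 0 else h.y ⟨n - 1, by omega⟩

/-- A point of `ℍ_n` is a horizontal vector if its `z`-coordinate vanishes. -/
def IsHoriz (h : Heis n) : Prop := h.z = 0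

/-- The vertical plane `V_0 = {y_n = 0}`. -/
def V0 (n : ℕ) : Set (Heis n) := {h | yn h = 0}

/-- `w^t = δ_t(w)`, for `w` a horizontal vector. -/
def wpow (w : Heis n) (t : ℝ) : Heis n := dil t w

/-- The projection to `V_0` along cosets of `⟨w⟩`: `Π_w(h) = h ⬝ w^{-y_n(h)}`. -/
def Piw (w : Heis n) (h : Heis n) : Heis n := h * wpow w (-(yn h))

/-- `Ω̄(g,h) = Ω(π(g), π(h))`. -/
def Obar (g h : Heis n) : ℝ := Om (pr g) (pr h)

/-- The subgroup `P_w = V_0 ∩ w^{Ω̄}`. -/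
def Pw (w : Heis n) : Set (Heis n) := {h | yn h = 0 ∧ Obar h w = 0}

/-- The horizontal subspace `C_w = A ∩ V_0 ∩ w^Ω`. -/
def Cw (w : Heis n) : Set (Heis n) := {h | h.z = 0 ∧ yn h = 0 ∧ Obar h w = 0}

/-- The Euclidean inner product of the horizontal coordinates. -/
def edot (g h : Heis n) : ℝ := ∑ i, g.x i * h.x i + ∑ i, g.y i * h.y i

/-- The `w`-intrinsic graph of a function `f : V_0 → ℝ`. -/
def graphOf (f : Heis n → ℝ) (w : Heis n) : Set (Heis n) :=
  (fun v => v * wpow w (f v)) '' V0 n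

/-- The vector `Y_n`. -/
def Yvec (n : ℕ) : Heis n := ⟨0, fun i => if (i : ℕ) = n - 1 then 1 else 0, 0⟩

section Metric

variable [MetricSpace (Heis n)]

/-- The open double cone `Cone_λ`. -/
def Cone (lam : ℝ) : Set (Heis n) := {p | lam * dist (1 : Heis n) p < |yn p|}

/-- `Γ` is an intrinsic `λ`-Lipschitz graph: `(x ⬝ Cone_λ) ∩ Γ = ∅` for all `x ∈ Γ`. -/
def IsIntrinsicLipGraph (lam : ℝ) (Γ : Set (Heis n)) : Prop :=
  ∀ x ∈ Γ, ∀ c ∈ Cone (n := n) lam, x * c ∉ Γ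

end Metric

end Heis

namespace Heis

def Rw {n : ℕ} (w ν : Heis n) : Set (Heis n) :=
  {h | ∃ (s t : ℝ) (p : Heis n), p ∈ Cw w ∧ edot p p ≤ 1 ∧ |s| ≤ 1 ∧ |t| ≤ 1 ∧
    h = ⟨s • ν.x + p.x, s • ν.y + p.y, t⟩}

def Qw {n : ℕ} (w ν : Heis n) (g : Heis n) (r : ℝ) : Set (Heis n) :=
  Piw w '' ((g * ·) '' (dil r '' Rw w ν))

/-- The coordinate parametrization `ℝ^{2n+2} ≅ V₀ ⊂ ℍ_{n+1}`. -/
def embedV0 {n : ℕ} (p : (Fin (n + 1) → ℝ) × (Fin n → ℝ) × ℝ) : Heis (n + 1) :=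
  ⟨p.1, Fin.snoc p.2.1 0, p.2.2⟩

/-- The coordinates of a point of `V₀ ⊂ ℍ_{n+1}`. -/
def coordV0 {n : ℕ} (h : Heis (n + 1)) : (Fin (n + 1) → ℝ) × (Fin n → ℝ) × ℝ :=
  (h.x, fun i => h.y i.castSucc, h.z)

end Heis

/-!
In the coordinates `(a, b, c)` of `V₀`, the map `v ↦ Π_w(g v) = g v w^{-y_n(g)}` reads
`(a, b, c) ↦ (a + A, b + B, c + φ(a, b))`: a translation of the horizontal coordinates and a shear
in the vertical one, so it preserves Lebesgue measure by Fubini. Hence `Q_w(g, r)` has the measure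
of `δ_r(R_w)`, which is `r^{2(n+1)+1}` times that of `R_w`. Finally `R_w` is bounded, and it
contains a neighbourhood of `0` in `V₀`: as `ν ⊥ C_w` forces `Ω̄(ν, w) ≠ 0`, every small horizontal
`v ∈ V₀` splits as `s ν + p` with `s = Ω̄(v, w) / Ω̄(ν, w)` and `p ∈ C_w` both small.
-/

open MeasureTheory

section AddShear

variable {α β : Type*} [MeasurableSpace α] [MeasurableSpace β] [AddGroup α] [AddGroup β]
  [MeasurableAdd α] [MeasurableSub α] [MeasurableAdd₂ β] [MeasurableSub₂ β]

def MeasurableEquiv.addShear (a : α) {f : α → β} (hf : Measurable f) : α × β ≃ᵐ α × β where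
  toFun p := (p.1 + a, p.2 + f p.1)
  invFun p := (p.1 - a, p.2 - f (p.1 - a))
  left_inv p := by simp
  right_inv p := by simp
  measurable_toFun :=
    (measurable_fst.add_const a).prodMk (measurable_snd.add (hf.comp measurable_fst))
  measurable_invFun :=
    (measurable_fst.sub_const a).prodMk (measurable_snd.sub (hf.comp (measurable_fst.sub_const a)))

@[simp]
theorem MeasurableEquiv.addShear_apply (a : α) {f : α → β} (hf : Measurable f) (p : α × β) :
    MeasurableEquiv.addShear a hf p = (p.1 + a, p.2 + f p.1) := rfl

theorem measurePreserving_addShear (μ : Measure α) (ν : Measure β) [SFinite μ] [SFinite ν]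
    [μ.IsAddRightInvariant] [ν.IsAddRightInvariant] (a : α) {f : α → β} (hf : Measurable f) :
    MeasurePreserving (MeasurableEquiv.addShear a hf) (μ.prod ν) (μ.prod ν) :=
  (measurePreserving_add_right μ a).skew_product (g := fun x y => y + f x)
    (measurable_snd.add (hf.comp measurable_fst))
    (Filter.Eventually.of_forall fun x => (measurePreserving_add_right ν (f x)).map_eq)

end AddShear

theorem norm_le_one_of_sum_mul_self_le_one {ι : Type*} [Fintype ι] {u : ι → ℝ}
    (hu : ∑ i, u i * u i ≤ 1) : ‖u‖ ≤ 1 :=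
  (pi_norm_le_iff_of_nonneg zero_le_one).2 fun i => by
    rw [Real.norm_eq_abs, abs_le_one_iff_mul_self_le_one]
    exact (Finset.single_le_sum (fun j _ => mul_self_nonneg (u j)) (Finset.mem_univ i)).trans hu

open scoped ENNReal

theorem ENNReal.exists_inv_le_and_le {a : ℝ≥0∞} (h0 : a ≠ 0) (htop : a ≠ ⊤) :
    ∃ C : ℝ≥0∞, 1 ≤ C ∧ C ≠ ⊤ ∧ C⁻¹ ≤ a ∧ a ≤ C := by
  refine ⟨max 1 (max a a⁻¹), le_max_left _ _, by simp [h0, htop], ?_, ?_⟩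
  · exact ENNReal.inv_le_iff_inv_le.2 (le_max_of_le_right (le_max_right _ _))
  · exact le_max_of_le_right (le_max_left _ _)

namespace Heis

theorem Om_sub_smul_left {m : ℕ} (x x' y y' : Fin m → ℝ) (s : ℝ)
    (v : (Fin m → ℝ) × (Fin m → ℝ)) :
    Om (x - s • x', y - s • y') v = Om (x, y) v - s * Om (x', y') v := by
  simp only [Om, Pi.sub_apply, Pi.smul_apply, smul_eq_mul, Finset.mul_sum,
    ← Finset.sum_sub_distrib]
  exact Finset.sum_congr rfl fun i _ => by ring

theorem norm_le_one_of_edot_self_le_one {m : ℕ} {p : Heis m} (hp : edot p p ≤ 1) :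
    ‖p.x‖ ≤ 1 ∧ ‖p.y‖ ≤ 1 := by
  have hx : 0 ≤ ∑ i, p.x i * p.x i := Finset.sum_nonneg fun i _ => mul_self_nonneg _
  have hy : 0 ≤ ∑ i, p.y i * p.y i := Finset.sum_nonneg fun i _ => mul_self_nonneg _
  rw [edot] at hp
  exact ⟨norm_le_one_of_sum_mul_self_le_one (by linarith),
    norm_le_one_of_sum_mul_self_le_one (by linarith)⟩

abbrev V0Coords (n : ℕ) := (Fin (n + 1) → ℝ) × (Fin n → ℝ) × ℝ

variable {n : ℕ}

instance : (volume : Measure (V0Coords n)).IsAddHaarMeasure :=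
  Measure.prod.instIsAddHaarMeasure _ ((volume : Measure (Fin n → ℝ)).prod volume)

theorem yn_eq_last (h : Heis (n + 1)) : yn h = h.y (Fin.last n) :=
  dif_neg n.succ_ne_zero

theorem yn_mul (g h : Heis (n + 1)) : yn (g * h) = yn g + yn h := by
  simp [yn_eq_last, mul_def]

theorem yn_dil (t : ℝ) (h : Heis (n + 1)) : yn (dil t h) = t * yn h := by
  simp [yn_eq_last, dil]

theorem image_dil_subset_V0 (r : ℝ) {S : Set (Heis (n + 1))} (hS : S ⊆ V0 (n + 1)) :
    dil r '' S ⊆ V0 (n + 1) := by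
  rintro _ ⟨h, hh, rfl⟩
  show yn (dil r h) = 0
  rw [yn_dil, show yn h = 0 from hS hh, mul_zero]

theorem yn_embedV0 (v : V0Coords n) : yn (embedV0 v) = 0 := by
  simp [yn_eq_last, embedV0]

theorem embedV0_zero : embedV0 (0 : V0Coords n) = 1 := by
  ext j
  · rfl
  · induction j using Fin.lastCases <;> simp [embedV0, one_def]
  · rfl

theorem coordV0_embedV0 (v : V0Coords n) : coordV0 (embedV0 v) = v := by
  simp [coordV0, embedV0]

theorem embedV0_injective : Function.Injective (embedV0 (n := n)) :=
  Function.LeftInverse.injective coordV0_embedV0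

theorem embedV0_coordV0 {h : Heis (n + 1)} (hh : h ∈ V0 (n + 1)) : embedV0 (coordV0 h) = h := by
  ext j
  · rfl
  · induction j using Fin.lastCases with
    | last => simpa [embedV0, coordV0, V0, yn_eq_last, eq_comm] using hh
    | cast i => simp [embedV0, coordV0]
  · rfl

theorem preimage_embedV0_image {f : Heis (n + 1) → Heis (n + 1)} {F : V0Coords n → V0Coords n}
    (hfF : ∀ v, f (embedV0 v) = embedV0 (F v)) {S : Set (Heis (n + 1))} (hS : S ⊆ V0 (n + 1)) :
    embedV0 ⁻¹' (f '' S) = F '' (embedV0 ⁻¹' S) := by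
  ext v
  constructor
  · rintro ⟨h, hh, hv⟩
    refine ⟨coordV0 h, by rwa [Set.mem_preimage, embedV0_coordV0 (hS hh)], embedV0_injective ?_⟩
    rw [← hfF, embedV0_coordV0 (hS hh), hv]
  · rintro ⟨u, hu, rfl⟩
    exact ⟨embedV0 u, hu, hfF u⟩

def zShift (g k : Heis (n + 1)) (q : (Fin (n + 1) → ℝ) × (Fin n → ℝ)) : ℝ :=
  (g * embedV0 (q.1, q.2, 0) * k).z

theorem continuous_zShift (g k : Heis (n + 1)) : Continuous (zShift g k) := by
  unfold zShift
  simp only [mul_def, embedV0, pr, Om]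
  fun_prop

/-- The map `v ↦ coordV0 (g * embedV0 v * k)` (see `coordTranslate_apply`), built as a shear of
`((a, b), c)` so that it is visibly measure preserving. -/
def coordTranslate (g k : Heis (n + 1)) : V0Coords n ≃ᵐ V0Coords n :=
  MeasurableEquiv.prodAssoc.symm.trans <|
    (MeasurableEquiv.addShear (g.x + k.x, fun i => g.y i.castSucc + k.y i.castSucc)
      (continuous_zShift g k).measurable).trans MeasurableEquiv.prodAssoc

theorem measurePreserving_coordTranslate (g k : Heis (n + 1)) :
    MeasurePreserving (coordTranslate g k) :=
  (volume_preserving_prodAssoc.symm _).trans <|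
    (measurePreserving_addShear ((volume : Measure (Fin (n + 1) → ℝ)).prod volume) volume _ _).trans
      volume_preserving_prodAssoc

theorem coordTranslate_apply (g k : Heis (n + 1)) (v : V0Coords n) :
    coordTranslate g k v = coordV0 (g * embedV0 v * k) := by
  obtain ⟨a, b, c⟩ := v
  simp only [coordTranslate, MeasurableEquiv.trans_apply, MeasurableEquiv.addShear_apply, zShift,
    coordV0, mul_def, embedV0, pr, MeasurableEquiv.prodAssoc, MeasurableEquiv.symm_mk,
    MeasurableEquiv.coe_mk, Equiv.prodAssoc_symm_apply, Equiv.prodAssoc_apply, Prod.mk_add_mk,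
    add_zero, Pi.add_apply, Fin.snoc_castSucc, Prod.mk.injEq]
  refine ⟨by abel, ?_, by ring⟩
  ext i
  simp only [Pi.add_apply]
  ring

theorem embedV0_coordTranslate {g k : Heis (n + 1)} (hgk : yn g + yn k = 0) (v : V0Coords n) :
    embedV0 (coordTranslate g k v) = g * embedV0 v * k := by
  rw [coordTranslate_apply, embedV0_coordV0]
  simp [V0, yn_mul, yn_embedV0, hgk]

theorem Piw_mul_embedV0 (w g : Heis (n + 1)) (v : V0Coords n) :
    Piw w (g * embedV0 v) = g * embedV0 v * wpow w (-yn g) := by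
  rw [Piw, yn_mul, yn_embedV0, add_zero]

theorem Piw_mul_embedV0_eq_embedV0_coordTranslate {w : Heis (n + 1)} (hwy : yn w = 1)
    (g : Heis (n + 1)) (v : V0Coords n) :
    Piw w (g * embedV0 v) = embedV0 (coordTranslate g (wpow w (-yn g)) v) := by
  rw [Piw_mul_embedV0, embedV0_coordTranslate]
  simp [wpow, yn_dil, hwy]

def dilCoords (r : ℝ) (v : V0Coords n) : V0Coords n := (r • v.1, r • v.2.1, r ^ 2 * v.2.2)

theorem dil_embedV0 (r : ℝ) (v : V0Coords n) : dil r (embedV0 v) = embedV0 (dilCoords r v) := by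
  ext j
  · rfl
  · induction j using Fin.lastCases <;> simp [dil, embedV0, dilCoords]
  · rfl

theorem volume_image_dilCoords (r : ℝ) (T : Set (V0Coords n)) :
    volume (dilCoords r '' T) = ENNReal.ofReal (|r| ^ (2 * (n + 1) + 1)) * volume T := by
  let f : V0Coords n →ₗ[ℝ] V0Coords n :=
    (r • LinearMap.id).prodMap ((r • LinearMap.id).prodMap ((r ^ 2) • LinearMap.id))
  have hf : dilCoords r = f := by
    ext v <;> simp [dilCoords, f]
  have hdet : LinearMap.det f = r ^ (2 * (n + 1) + 1) := by
    simp only [f, LinearMap.det_prodMap, LinearMap.det_smul, LinearMap.det_id,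
      Module.finrank_fin_fun, Module.finrank_self, mul_one]
    ring
  rw [hf, Measure.addHaar_image_linearMap, hdet, abs_pow]

theorem Rw_subset_V0 (w : Heis (n + 1)) {ν : Heis (n + 1)} (hν0 : ν ∈ V0 (n + 1)) :
    Rw w ν ⊆ V0 (n + 1) := by
  rintro _ ⟨_, _, p, ⟨-, hp0, -⟩, -, -, -, rfl⟩
  simp_all [V0, yn_eq_last]

theorem preimage_embedV0_Qw {w ν : Heis (n + 1)} (hwy : yn w = 1) (hν0 : ν ∈ V0 (n + 1))
    (g : Heis (n + 1)) (r : ℝ) :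
    embedV0 ⁻¹' Qw w ν g r =
      coordTranslate g (wpow w (-yn g)) '' (embedV0 ⁻¹' (dil r '' Rw w ν)) := by
  rw [Qw, Set.image_image]
  exact preimage_embedV0_image (Piw_mul_embedV0_eq_embedV0_coordTranslate hwy g)
    (image_dil_subset_V0 r (Rw_subset_V0 w hν0))

theorem isBounded_preimage_embedV0_Rw (w ν : Heis (n + 1)) :
    Bornology.IsBounded (embedV0 ⁻¹' Rw w ν) := by
  refine (Metric.isBounded_closedBall (x := 0) (r := ‖ν.x‖ + ‖ν.y‖ + 1)).subset ?_
  rintro ⟨a, b, c⟩ ⟨s, t, p, -, hp, hs, ht, hv⟩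
  obtain ⟨hpx, hpy⟩ := norm_le_one_of_edot_self_le_one hp
  simp only [embedV0, Heis.mk.injEq] at hv
  obtain ⟨rfl, hb, rfl⟩ := hv
  have hshift {m : ℕ} (u q : Fin m → ℝ) (hq : ‖q‖ ≤ 1) : ‖s • u + q‖ ≤ ‖u‖ + 1 :=
    calc ‖s • u + q‖ ≤ |s| * ‖u‖ + ‖q‖ := by
          simpa only [norm_smul, Real.norm_eq_abs] using norm_add_le (s • u) q
      _ ≤ ‖u‖ + 1 := by gcongr; nlinarith [norm_nonneg u]
  have hb' : ‖b‖ ≤ ‖(Fin.snoc b 0 : Fin (n + 1) → ℝ)‖ :=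
    (pi_norm_le_iff_of_nonneg (norm_nonneg _)).2 fun i => by
      simpa using norm_le_pi_norm (Fin.snoc b 0 : Fin (n + 1) → ℝ) i.castSucc
  rw [hb] at hb'
  have hx := hshift ν.x p.x hpx
  have hy := hshift ν.y p.y hpy
  rw [Metric.mem_closedBall, dist_zero_right, norm_prod_le_iff, norm_prod_le_iff, Real.norm_eq_abs]
  refine ⟨?_, ?_, ?_⟩ <;> linarith [norm_nonneg ν.x, norm_nonneg ν.y]

theorem Obar_ne_zero_of_forall_edot_Cw {w ν : Heis (n + 1)} (hν0 : ν ∈ V0 (n + 1))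
    (hν : edot ν ν ≠ 0) (hνC : ∀ p ∈ Cw w, edot ν p = 0) : Obar ν w ≠ 0 :=
  fun hνw => hν (hνC ⟨ν.x, ν.y, 0⟩ ⟨rfl, hν0, hνw⟩)

open Topology in
theorem preimage_embedV0_Rw_mem_nhds {w ν : Heis (n + 1)} (hν0 : ν ∈ V0 (n + 1))
    (hνw : Obar ν w ≠ 0) : embedV0 ⁻¹' Rw w ν ∈ 𝓝 (0 : V0Coords n) := by
  have hνy : ν.y (Fin.last n) = 0 := by rwa [← yn_eq_last]
  set s : V0Coords n → ℝ := fun v => Obar (embedV0 v) w / Obar ν w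
  set p : V0Coords n → Heis (n + 1) :=
    fun v => ⟨(embedV0 v).x - s v • ν.x, (embedV0 v).y - s v • ν.y, 0⟩
  have hpC (v : V0Coords n) : p v ∈ Cw w := by
    refine ⟨rfl, ?_, ?_⟩
    · simp [p, yn_eq_last, embedV0, hνy]
    · simp only [p, Obar, pr, Om_sub_smul_left]
      exact sub_eq_zero.2 (div_mul_cancel₀ (Obar (embedV0 v) w) hνw).symm
  have hs : Continuous fun v => |s v| := by
    simp only [s, Obar, embedV0, pr, Om]
    fun_prop
  have hp : Continuous fun v => edot (p v) (p v) := by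
    simp only [p, s, edot, Obar, embedV0, pr, Om]
    fun_prop
  have hc : Continuous fun v : V0Coords n => |v.2.2| := by fun_prop
  have hs0 : s 0 = 0 := by simp [s, embedV0_zero, Obar, pr, one_def, Om]
  have hp0 : edot (p 0) (p 0) = 0 := by simp [p, hs0, embedV0_zero, one_def, edot]
  filter_upwards [(hs.tendsto' 0 0 (by rw [hs0, abs_zero])).eventually_lt_const one_pos,
    (hp.tendsto' 0 0 hp0).eventually_lt_const one_pos,
    (hc.tendsto' 0 0 (by simp)).eventually_lt_const one_pos] with v hsv hpv hcv
  refine ⟨s v, v.2.2, p v, hpC v, hpv.le, hsv.le, hcv.le, ?_⟩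
  ext <;> simp [p, embedV0]

end Heis

open Heis MeasureTheory in
theorem Piw_measure_preserving_and_Qw_volume_general {n : ℕ}
    (w : Heis (n + 1)) (hwy : yn w = 1)
    (ν : Heis (n + 1)) (hν0 : ν ∈ V0 (n + 1)) (hν1 : edot ν ν = 1)
    (hνC : ∀ p ∈ Cw w, edot ν p = 0) :
    (∀ g : Heis (n + 1),
      MeasurePreserving (fun v => coordV0 (Piw w (g * embedV0 v)))
        (volume : Measure ((Fin (n + 1) → ℝ) × (Fin n → ℝ) × ℝ)) volume) ∧
    (∀ (g : Heis (n + 1)) (r : ℝ), 0 < r →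
      volume (embedV0 ⁻¹' Qw w ν g r) = volume (embedV0 ⁻¹' (dil r '' Rw w ν))) ∧
    (∃ C : ℝ≥0∞, 1 ≤ C ∧ C ≠ ⊤ ∧
      ∀ (g : Heis (n + 1)) (r : ℝ), 0 < r →
        C⁻¹ * ENNReal.ofReal (r ^ (2 * (n + 1) + 1)) ≤ volume (embedV0 ⁻¹' Qw w ν g r) ∧
        volume (embedV0 ⁻¹' Qw w ν g r) ≤ C * ENNReal.ofReal (r ^ (2 * (n + 1) + 1))) := by
  have hcoord (g : Heis (n + 1)) :
      (fun v => coordV0 (Piw w (g * embedV0 v))) = coordTranslate g (wpow w (-yn g)) := by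
    ext1 v
    rw [Piw_mul_embedV0, coordTranslate_apply]
  have hQ (g : Heis (n + 1)) (r : ℝ) :
      volume (embedV0 ⁻¹' Qw w ν g r) = volume (embedV0 ⁻¹' (dil r '' Rw w ν)) := by
    rw [preimage_embedV0_Qw hwy hν0, MeasurableEquiv.image_eq_preimage_symm,
      ((measurePreserving_coordTranslate _ _).symm _).measure_preimage_equiv]
  set V := volume (embedV0 ⁻¹' Rw w ν)
  have hV0 : V ≠ 0 := (Measure.measure_pos_of_mem_nhds _ (preimage_embedV0_Rw_mem_nhds hν0
    (Obar_ne_zero_of_forall_edot_Cw hν0 (by simp [hν1]) hνC))).ne'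
  have hVtop : V ≠ ⊤ := (isBounded_preimage_embedV0_Rw w ν).measure_lt_top.ne
  obtain ⟨C, hC1, hCtop, hCV, hVC⟩ := ENNReal.exists_inv_le_and_le hV0 hVtop
  refine ⟨fun g => hcoord g ▸ measurePreserving_coordTranslate _ _, fun g r _ => hQ g r,
    C, hC1, hCtop, fun g r hr => ?_⟩
  rw [hQ, preimage_embedV0_image (dil_embedV0 r) (Rw_subset_V0 w hν0), volume_image_dilCoords,
    abs_of_pos hr, mul_comm _ V]
  exact ⟨by gcongr, by gcongr⟩

open Heis MeasureTheory in
/-- The map `x ↦ Π_w(gx)`, read in the coordinates of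
`V₀ ≅ ℝ^{2n+2} ⊂ ℍ_{n+1}`, preserves Lebesgue measure, for every `g` and every
horizontal `w` with `y_n(w) = 1`.  Consequently the Lebesgue measure of
`Q_w(g,r) = Π_w(g δ_r(R_w))` equals that of `δ_r(R_w)` and is comparable to
`r^{2(n+1)+1}`, independently of `g`. -/
theorem Piw_measure_preserving_and_Qw_volume {n : ℕ}
    (w : Heis (n + 1)) (hw : IsHoriz w) (hwy : yn w = 1)
    (ν : Heis (n + 1)) (hν : IsHoriz ν) (hν0 : ν ∈ V0 (n + 1)) (hν1 : edot ν ν = 1)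
    (hνC : ∀ p ∈ Cw w, edot ν p = 0) :
    (∀ g : Heis (n + 1),
      MeasurePreserving (fun v => coordV0 (Piw w (g * embedV0 v)))
        (volume : Measure ((Fin (n + 1) → ℝ) × (Fin n → ℝ) × ℝ)) volume) ∧
    (∀ (g : Heis (n + 1)) (r : ℝ), 0 < r →
      volume (embedV0 ⁻¹' Qw w ν g r) = volume (embedV0 ⁻¹' (dil r '' Rw w ν))) ∧
    (∃ C : ℝ≥0∞, 1 ≤ C ∧ C ≠ ⊤ ∧
      ∀ (g : Heis (n + 1)) (r : ℝ), 0 < r →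
        C⁻¹ * ENNReal.ofReal (r ^ (2 * (n + 1) + 1)) ≤ volume (embedV0 ⁻¹' Qw w ν g r) ∧
        volume (embedV0 ⁻¹' Qw w ν g r) ≤ C * ENNReal.ofReal (r ^ (2 * (n + 1) + 1))) :=
  Piw_measure_preserving_and_Qw_volume_general w hwy ν hν0 hν1 hνC
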